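/- Let H' be an r-uniform hypergraph whose longest Berge-paths have length l ≥ 1, and among all Berge-paths of length l in H' choose one, with defining vertices u_1, ..., u_{l+1} and defining hyperedges F = {f_1, ..., f_l}, that minimizes the quantity x_1 + x_{l+1}, where x_1 (respectively x_{l+1}) is the number of hyperedges of F containing u_1 (respectively u_{l+1}). Then x_1 ≤ √(r·l) and x_{l+1} ≤ √(r·l). -/

import Mathlib

open scoped Classical

/-- A Berge-path of length `t` in the hypergraph `H` (a family of hyperedges):
an alternating sequence of `t+1` distinct vertices and `t` distinct hyperedges
`v₁, e₁, …, e_t, v_{t+1}` with `vᵢ, vᵢ₊₁ ∈ eᵢ`. -/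
structure BergePath {V : Type*} (H : Finset (Finset V)) (t : ℕ) where
  verts : Fin (t + 1) → V
  edges : Fin t → Finset V
  verts_inj : Function.Injective verts
  edges_inj : Function.Injective edges
  edges_mem : ∀ i, edges i ∈ H
  fst_mem : ∀ i : Fin t, verts i.castSucc ∈ edges i
  snd_mem : ∀ i : Fin t, verts i.succ ∈ edges i

/-- A Berge-cycle of length `t` in the hypergraph `H`: `t` distinct vertices and
`t` distinct hyperedges with `vᵢ, vᵢ₊₁ ∈ eᵢ`, indices mod `t`. -/
structure BergeCycle {V : Type*} (H : Finset (Finset V)) (t : ℕ) where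
  verts : Fin t → V
  edges : Fin t → Finset V
  verts_inj : Function.Injective verts
  edges_inj : Function.Injective edges
  edges_mem : ∀ i, edges i ∈ H
  fst_mem : ∀ i, verts i ∈ edges i
  snd_mem : ∀ i : Fin t, verts ⟨(i.val + 1) % t, Nat.mod_lt _ i.pos⟩ ∈ edges i

/-- `u` and `v` are joined by a Berge-path of `H`. -/
def BergeReachable {V : Type*} (H : Finset (Finset V)) (u v : V) : Prop :=
  ∃ t, ∃ P : BergePath H t, P.verts 0 = u ∧ P.verts (Fin.last t) = v

/-- A hypergraph on the vertex type `V` is connected if any two vertices are joined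
by a Berge-path. -/
def HConnected {V : Type*} (H : Finset (Finset V)) : Prop :=
  ∀ u v : V, u ≠ v → BergeReachable H u v

/-- The degree of a vertex: the number of hyperedges containing it. -/
noncomputable def hdeg {V : Type*} (H : Finset (Finset V)) (v : V) : ℕ :=
  (H.filter (fun e => v ∈ e)).card

/-- The vertex neighborhood of `v` in `H`. -/
noncomputable def nbhd {V : Type*} [Fintype V] (H : Finset (Finset V)) (v : V) : Finset V :=
  Finset.univ.filter (fun u => u ≠ v ∧ ∃ e ∈ H, v ∈ e ∧ u ∈ e)

/-- The sub-hypergraph induced by a set `S` of vertices: all hyperedges lying inside `S`. -/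
noncomputable def restrictTo {V : Type*} (H : Finset (Finset V)) (S : Finset V) :
    Finset (Finset V) :=
  H.filter (fun e => e ⊆ S)

/-- `DelProcess H D S T` : starting from the vertex set `S`, the vertex set `T` can be
reached by repeatedly deleting a vertex whose degree in the current induced
sub-hypergraph is less than `D` (together with all hyperedges containing it). -/
inductive DelProcess {V : Type*} (H : Finset (Finset V)) (D : ℕ) :
    Finset V → Finset V → Prop
  | refl (S : Finset V) : DelProcess H D S S
  | step (S T : Finset V) (v : V) (hv : v ∈ S)
      (hd : hdeg (restrictTo H S) v < D)
      (h : DelProcess H D (S.erase v) T) : DelProcess H D S T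

/-- The edge family of `H_{n,k}` for odd `k`, on vertex set `S` with kernel `A`:
all `r`-subsets of `S` having at most one vertex outside `A`. -/
noncomputable def HnkFamilyOdd {V : Type*} (r : ℕ) (S A : Finset V) : Finset (Finset V) :=
  S.powerset.filter (fun s => s.card = r ∧ (s \ A).card ≤ 1)

/-- The edge family of `H_{n,k}` for even `k`: additionally all `r`-subsets consisting of
`b1`, `b2` and `r-2` vertices of `A`. -/
noncomputable def HnkFamilyEven {V : Type*} (r : ℕ) (S A : Finset V) (b1 b2 : V) :
    Finset (Finset V) :=
  S.powerset.filter (fun s => s.card = r ∧ ((s \ A).card ≤ 1 ∨ s \ A = {b1, b2}))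

/-- `H` is (a copy of) the extremal hypergraph `H_{m,k}` on the vertex set `S`
(where `m = |S|`). Note that `⌊(k-1)/2⌋` equals `(k-1)/2` in ℕ for odd `k`,
and `(k-2)/2` for even `k`. -/
def IsHnkOn {V : Type*} (r k : ℕ) (S : Finset V) (H : Finset (Finset V)) : Prop :=
  ∃ A ⊆ S, A.card = (k - 1) / 2 ∧
    ((Odd k ∧ H = HnkFamilyOdd r S A) ∨
     (Even k ∧ ∃ b1 ∈ S \ A, ∃ b2 ∈ S \ A, b1 ≠ b2 ∧ H = HnkFamilyEven r S A b1 b2))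

/-- The extremal number of hyperedges:
`C(⌊(k-1)/2⌋, r-1)·(n − ⌊(k-1)/2⌋) + C(⌊(k-1)/2⌋, r) + [2 ∣ k]·C(⌊(k-1)/2⌋, r-2)`. -/
def extremalCount (r k n : ℕ) : ℕ :=
  ((k - 1) / 2).choose (r - 1) * (n - (k - 1) / 2) + ((k - 1) / 2).choose r +
    (if 2 ∣ k then ((k - 1) / 2).choose (r - 2) else 0)

/-- The threshold `N_{k,r}`. -/
def Nkr (r k : ℕ) : ℕ :=
  (r * (k - 1)).choose r + ((k - 1) / 2).choose (r - 1) * ((k - 1) / 2)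
    - ((k - 1) / 2).choose r - (if 2 ∣ k then ((k - 1) / 2).choose (r - 2) else 0)
    + r * (k - 1)

/-!
Rotation: if the first vertex `u₁` lies in the defining hyperedge `fᵢ`, then
`uᵢ, fᵢ₋₁, …, f₁, u₁, fᵢ, uᵢ₊₁, …, u_{l+1}` is again a Berge-path of length `l` with the same
hyperedges and the same last vertex. Minimality of `x₁ + x_{l+1}` therefore gives each of the
`x₁` vertices `uᵢ` with `u₁ ∈ fᵢ` at least `x₁` hyperedges of `F`, and double counting incidences
between these vertices and the `l` hyperedges of size `r` yields `x₁² ≤ r·l`.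
By reversing the path the same bound holds for `x_{l+1}`.
-/

open Finset

def Fin.revPrefix {n : ℕ} (m : Fin (n + 1)) (j : Fin n) : Fin n :=
  if h : j.val < m.val then ⟨m.val - 1 - j.val, by omega⟩ else j

lemma Fin.val_revPrefix {n : ℕ} (m : Fin (n + 1)) (j : Fin n) :
    (Fin.revPrefix m j).val = if j.val < m.val then m.val - 1 - j.val else j.val := by
  unfold Fin.revPrefix
  split_ifs <;> rfl

lemma Fin.revPrefix_involutive {n : ℕ} (m : Fin (n + 1)) :
    Function.Involutive (Fin.revPrefix m) := by
  intro j
  ext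
  simp only [Fin.val_revPrefix]
  split_ifs <;> omega

lemma Finset.card_sq_le_of_le_card_filter_mem {α : Type*} [DecidableEq α]
    {F : Finset (Finset α)} {B : Finset α} {r : ℕ} (hF : ∀ e ∈ F, #e ≤ r)
    (hB : ∀ u ∈ B, #B ≤ #{e ∈ F | u ∈ e}) :
    #B ^ 2 ≤ r * #F :=
  calc #B ^ 2 = #B * #B := sq _
    _ ≤ ∑ e ∈ F, #(B ∩ e) := le_sum_card_inter hB
    _ ≤ ∑ _e ∈ F, r := sum_le_sum fun e he => (card_le_card inter_subset_right).trans (hF e he)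
    _ = r * #F := by rw [sum_const, smul_eq_mul, mul_comm]

namespace BergePath

variable {V : Type*} {H : Finset (Finset V)} {l : ℕ}

/-- The set `F` of defining hyperedges. -/
noncomputable def edgeSet (P : BergePath H l) : Finset (Finset V) := univ.image P.edges

/-- The quantity `x₁ + x_{l+1}`. -/
noncomputable def endDegSum (P : BergePath H l) : ℕ :=
  hdeg P.edgeSet (P.verts 0) + hdeg P.edgeSet (P.verts (Fin.last l))

lemma edgeSet_subset (P : BergePath H l) : P.edgeSet ⊆ H := by
  intro e he
  obtain ⟨i, -, rfl⟩ := mem_image.mp he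
  exact P.edges_mem i

lemma card_edgeSet (P : BergePath H l) : #P.edgeSet = l := by
  rw [edgeSet, card_image_of_injective _ P.edges_inj, card_univ, Fintype.card_fin]

lemma card_filter_mem_edges (P : BergePath H l) (v : V) :
    (univ.filter (fun i : Fin l => v ∈ P.edges i)).card = hdeg P.edgeSet v := by
  rw [hdeg, edgeSet, filter_image, card_image_of_injective _ P.edges_inj]

lemma verts_mem_edges (P : BergePath H l) {a : Fin (l + 1)} {k : Fin l}
    (h : a.val = k.val ∨ a.val = k.val + 1) : P.verts a ∈ P.edges k := by
  rcases h with h | h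
  · simpa [show a = k.castSucc from Fin.ext h] using P.fst_mem k
  · simpa [show a = k.succ from Fin.ext h] using P.snd_mem k

def reindex (P : BergePath H l) (σ : Equiv.Perm (Fin (l + 1))) (τ : Equiv.Perm (Fin l))
    (hfst : ∀ j, P.verts (σ j.castSucc) ∈ P.edges (τ j))
    (hsnd : ∀ j, P.verts (σ j.succ) ∈ P.edges (τ j)) : BergePath H l where
  verts := P.verts ∘ σ
  edges := P.edges ∘ τ
  verts_inj := P.verts_inj.comp σ.injective
  edges_inj := P.edges_inj.comp τ.injective
  edges_mem j := P.edges_mem (τ j)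
  fst_mem := hfst
  snd_mem := hsnd

lemma edgeSet_reindex (P : BergePath H l) (σ τ hfst hsnd) :
    (P.reindex σ τ hfst hsnd).edgeSet = P.edgeSet := by
  rw [edgeSet, edgeSet, reindex, ← image_image, image_univ_of_surjective τ.surjective]

def reverse (P : BergePath H l) : BergePath H l :=
  P.reindex Fin.revPerm Fin.revPerm
    (fun j => by simpa [Fin.rev_castSucc] using P.snd_mem j.rev)
    (fun j => by simpa [Fin.rev_succ] using P.fst_mem j.rev)

lemma edgeSet_reverse (P : BergePath H l) : P.reverse.edgeSet = P.edgeSet :=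
  P.edgeSet_reindex _ _ _ _

lemma reverse_verts_zero (P : BergePath H l) : P.reverse.verts 0 = P.verts (Fin.last l) := by
  simp [reverse, reindex]

lemma reverse_verts_last (P : BergePath H l) : P.reverse.verts (Fin.last l) = P.verts 0 := by
  simp [reverse, reindex]

lemma endDegSum_reverse (P : BergePath H l) : P.reverse.endDegSum = P.endDegSum := by
  rw [endDegSum, endDegSum, edgeSet_reverse, reverse_verts_zero, reverse_verts_last, add_comm]

/-- For `P = u₀, f₀, u₁, …, f_{l-1}, u_l` with `u₀ ∈ fᵢ`, the path
`uᵢ, fᵢ₋₁, …, f₀, u₀, fᵢ, uᵢ₊₁, …, u_l`. -/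
def rotate (P : BergePath H l) (i : Fin l) (hi : P.verts 0 ∈ P.edges i) : BergePath H l :=
  P.reindex (Fin.revPrefix_involutive i.succ.castSucc).toPerm
    (Fin.revPrefix_involutive i.castSucc).toPerm
    (fun j => by
      rcases eq_or_ne j i with rfl | hj
      · convert hi <;> ext <;> simp [Fin.val_revPrefix]
      · apply verts_mem_edges
        have := Fin.val_ne_of_ne hj
        simp only [Function.Involutive.coe_toPerm, Fin.val_revPrefix, Fin.val_castSucc,
          Fin.val_succ]
        split_ifs <;> omega)
    (fun j => by
      apply verts_mem_edges
      simp only [Function.Involutive.coe_toPerm, Fin.val_revPrefix, Fin.val_castSucc,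
        Fin.val_succ]
      split_ifs <;> omega)

section rotate

variable (P : BergePath H l) (i : Fin l) (hi : P.verts 0 ∈ P.edges i)

lemma edgeSet_rotate : (P.rotate i hi).edgeSet = P.edgeSet :=
  P.edgeSet_reindex _ _ _ _

lemma rotate_verts_zero : (P.rotate i hi).verts 0 = P.verts i.castSucc :=
  congrArg P.verts (Fin.ext (by simp [Fin.val_revPrefix]))

lemma rotate_verts_last : (P.rotate i hi).verts (Fin.last l) = P.verts (Fin.last l) :=
  congrArg P.verts (Fin.ext (by simp [Fin.val_revPrefix]))

end rotate

theorem sq_hdeg_verts_zero_le {r : ℕ} (hH : ∀ e ∈ H, #e ≤ r) (P : BergePath H l)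
    (hmin : ∀ Q : BergePath H l, P.endDegSum ≤ Q.endDegSum) :
    hdeg P.edgeSet (P.verts 0) ^ 2 ≤ r * l := by
  set x := hdeg P.edgeSet (P.verts 0)
  let B := (univ.filter fun i : Fin l => P.verts 0 ∈ P.edges i).image (P.verts ∘ Fin.castSucc)
  have hB : #B = x := by
    rw [card_image_of_injective _ (P.verts_inj.comp (Fin.castSucc_injective l)),
      card_filter_mem_edges]
  have hdegB : ∀ u ∈ B, x ≤ hdeg P.edgeSet u := by
    simp only [B, mem_image, mem_filter, mem_univ, true_and]
    rintro _ ⟨i, hi, rfl⟩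
    have := hmin (P.rotate i hi)
    rw [endDegSum, endDegSum, edgeSet_rotate, rotate_verts_zero, rotate_verts_last] at this
    exact Nat.le_of_add_le_add_right this
  rw [← hB, ← P.card_edgeSet]
  exact card_sq_le_of_le_card_filter_mem (fun e he => hH e (P.edgeSet_subset he)) (hB ▸ hdegB)

end BergePath

theorem minimal_end_degree_bound_general
    {V : Type*} (r l : ℕ) (H : Finset (Finset V))
    (huni : ∀ e ∈ H, e.card = r)
    (P : BergePath H l)
    (hmin : ∀ Q : BergePath H l,
      (Finset.univ.filter (fun i : Fin l => P.verts 0 ∈ P.edges i)).card +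
        (Finset.univ.filter (fun i : Fin l => P.verts (Fin.last l) ∈ P.edges i)).card ≤
      (Finset.univ.filter (fun i : Fin l => Q.verts 0 ∈ Q.edges i)).card +
        (Finset.univ.filter (fun i : Fin l => Q.verts (Fin.last l) ∈ Q.edges i)).card) :
    ((Finset.univ.filter (fun i : Fin l => P.verts 0 ∈ P.edges i)).card : ℝ) ≤
        Real.sqrt ((r : ℝ) * l) ∧
      ((Finset.univ.filter (fun i : Fin l => P.verts (Fin.last l) ∈ P.edges i)).card : ℝ) ≤
        Real.sqrt ((r : ℝ) * l) := by
  simp only [BergePath.card_filter_mem_edges] at hmin ⊢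
  change ∀ Q : BergePath H l, P.endDegSum ≤ Q.endDegSum at hmin
  have hH : ∀ e ∈ H, e.card ≤ r := fun e he => (huni e he).le
  have hfirst := P.sq_hdeg_verts_zero_le hH hmin
  have hlast := P.reverse.sq_hdeg_verts_zero_le hH (by simpa [P.endDegSum_reverse] using hmin)
  rw [P.edgeSet_reverse, P.reverse_verts_zero] at hlast
  exact ⟨Real.le_sqrt_of_sq_le (by exact_mod_cast hfirst),
    Real.le_sqrt_of_sq_le (by exact_mod_cast hlast)⟩

/-- If a longest Berge-path of the `r`-uniform hypergraph `H` has length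
`l ≥ 1` and `P` is a longest Berge-path minimizing `x₁ + x_{l+1}` (the numbers of defining
hyperedges containing the first, resp. last, defining vertex), then `x₁ ≤ √(r·l)` and
`x_{l+1} ≤ √(r·l)`. -/
theorem minimal_end_degree_bound
    {V : Type*} (r l : ℕ) (hl : 1 ≤ l) (H : Finset (Finset V))
    (huni : ∀ e ∈ H, e.card = r)
    (hlong : ∀ t, Nonempty (BergePath H t) → t ≤ l)
    (P : BergePath H l)
    (hmin : ∀ Q : BergePath H l,
      (Finset.univ.filter (fun i : Fin l => P.verts 0 ∈ P.edges i)).card +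
        (Finset.univ.filter (fun i : Fin l => P.verts (Fin.last l) ∈ P.edges i)).card ≤
      (Finset.univ.filter (fun i : Fin l => Q.verts 0 ∈ Q.edges i)).card +
        (Finset.univ.filter (fun i : Fin l => Q.verts (Fin.last l) ∈ Q.edges i)).card) :
    ((Finset.univ.filter (fun i : Fin l => P.verts 0 ∈ P.edges i)).card : ℝ) ≤
        Real.sqrt ((r : ℝ) * l) ∧
      ((Finset.univ.filter (fun i : Fin l => P.verts (Fin.last l) ∈ P.edges i)).card : ℝ) ≤
        Real.sqrt ((r : ℝ) * l) :=
  minimal_end_degree_bound_general r l H huni P hmin
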